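/- On the Heisenberg algebra H_n, the operators ∂_{x_l}, ∂_{y_l}, ∂_h defined on the PBW basis satisfy: [∂_r, ∂_s] = 0 for all r,s; [∂_{x_l}, λ_{x_l}] = id and [∂_{x_l}, λ_r] = 0 for generators r ≠ x_l; [∂_{y_l}, λ_{y_l}] = id and [∂_{y_l}, λ_r] = 0 for r ≠ y_l; [∂_h, λ_h] = id, [∂_h, λ_{y_l}] = −∂_{x_l}, [∂_h, λ_{x_l}] = 0. -/

import Mathlib

/-- A realization of the `n`-th Heisenberg algebra over `k`: a `k`-algebra `H` with
generators `h, x_1, …, x_n, y_1, …, y_n` satisfying `[x_i, y_j] = δ_{ij} h` and all other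
commutators of generators zero, together with its PBW basis `{h^m x^I y^J}`. -/
structure HeisenbergPBW (k : Type*) [Field k] (n : ℕ) (H : Type*) [Ring H]
    [Algebra k H] where
  h : H
  x : Fin n → H
  y : Fin n → H
  basis : Module.Basis (ℕ × (Fin n → ℕ) × (Fin n → ℕ)) k H
  basis_eq : ∀ (m : ℕ) (I J : Fin n → ℕ), basis (m, I, J) =
    h ^ m * (List.ofFn fun i => x i ^ I i).prod * (List.ofFn fun i => y i ^ J i).prod
  comm_xy : ∀ i j, x i * y j - y j * x i = if i = j then h else 0
  comm_xx : ∀ i j, x i * x j = x j * x i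
  comm_yy : ∀ i j, y i * y j = y j * y i
  h_central : ∀ a : H, h * a = a * h

namespace HeisenbergPBW

variable {k : Type*} [Field k] {n : ℕ} {H : Type*} [Ring H] [Algebra k H]

/-- The formal partial derivative `∂_{x_l}` on the PBW basis. -/
noncomputable def pdx (B : HeisenbergPBW k n H) (l : Fin n) : H →ₗ[k] H :=
  B.basis.constr k fun p =>
    (p.2.1 l) • B.basis (p.1, Function.update p.2.1 l (p.2.1 l - 1), p.2.2)

/-- The formal partial derivative `∂_{y_l}` on the PBW basis. -/
noncomputable def pdy (B : HeisenbergPBW k n H) (l : Fin n) : H →ₗ[k] H :=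
  B.basis.constr k fun p =>
    (p.2.2 l) • B.basis (p.1, p.2.1, Function.update p.2.2 l (p.2.2 l - 1))

/-- The formal partial derivative `∂_h` on the PBW basis `h^m x^I y^J`. -/
noncomputable def pdh (B : HeisenbergPBW k n H) : H →ₗ[k] H :=
  B.basis.constr k fun p => p.1 • B.basis (p.1 - 1, p.2.1, p.2.2)

end HeisenbergPBW

/-- The commutator of two `k`-linear endomorphisms. -/
def brk {k H : Type*} [Field k] [Ring H] [Algebra k H] (f g : H →ₗ[k] H) : H →ₗ[k] H :=
  f.comp g - g.comp f

/-! Left multiplication by `h` or `x_l` sends a PBW monomial `h^m x^I y^J` to another one,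
raising one exponent; left multiplication by `y_l` does too, up to the correction
`-i_l h^{m+1} x^{I-e_l} y^J` created by moving `y_l` past `x_l^{i_l}`. Hence every commutator
can be evaluated on a basis monomial, where it reduces to an identity between the natural-number
coefficients that the partial derivatives produce. -/

theorem List.prod_ofFn_pow_eq_pow_mul {M : Type*} [Monoid M] {n : ℕ} {f : Fin n → M}
    (hf : ∀ i j, Commute (f i) (f j)) (I : Fin n → ℕ) (l : Fin n) :
    (List.ofFn fun i => f i ^ I i).prod =
      f l ^ I l * (List.ofFn fun i => f i ^ Function.update I l 0 i).prod := by
  induction n with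
  | zero => exact l.elim0
  | succ m ih =>
    simp only [List.ofFn_succ, List.prod_cons]
    induction l using Fin.cases with
    | zero => simp
    | succ l =>
      rw [ih (fun i j => hf i.succ j.succ) (fun i => I i.succ) l,
        ((hf 0 l.succ).pow_pow _ _).left_comm, Function.update_of_ne (Fin.succ_ne_zero l).symm]
      simp only [Function.update_apply_of_injective I (Fin.succ_injective m)]

theorem List.mul_prod_ofFn_pow {M : Type*} [Monoid M] {n : ℕ} {f : Fin n → M}
    (hf : ∀ i j, Commute (f i) (f j)) (I : Fin n → ℕ) (l : Fin n) :
    f l * (List.ofFn fun i => f i ^ I i).prod =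
      (List.ofFn fun i => f i ^ Function.update I l (I l + 1) i).prod := by
  rw [prod_ofFn_pow_eq_pow_mul hf (Function.update I l (I l + 1)) l,
    prod_ofFn_pow_eq_pow_mul hf I l, ← mul_assoc, ← pow_succ', Function.update_self,
    Function.update_idem]

theorem mul_pow_eq_pow_mul_sub_nsmul {R : Type*} [Ring R] {c f y : R} (hc : Commute c f)
    (hy : y * f = f * y - c) (a : ℕ) : y * f ^ a = f ^ a * y - a • (c * f ^ (a - 1)) := by
  have mul_pow_succ (a : ℕ) : y * f ^ (a + 1) = f ^ (a + 1) * y - (a + 1) • (c * f ^ a) := by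
    induction a with
    | zero => simpa using hy
    | succ a ih =>
      rw [pow_succ, ← mul_assoc, ih, sub_mul, mul_assoc, hy, mul_sub, ← mul_assoc, ← pow_succ,
        smul_mul_assoc, mul_assoc, ← pow_succ, ← (hc.pow_right (a + 1)).eq, succ_nsmul _ (a + 1)]
      abel
  cases a with
  | zero => simp
  | succ a => simpa using mul_pow_succ a

theorem List.mul_prod_ofFn_pow_of_mul_eq_sub {R : Type*} [Ring R] {n : ℕ} {f : Fin n → R}
    (hf : ∀ i j, Commute (f i) (f j)) {c y : R} {l : Fin n} (hc : Commute c (f l))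
    (hyl : y * f l = f l * y - c) (hy : ∀ i ≠ l, Commute y (f i)) (I : Fin n → ℕ) :
    y * (List.ofFn fun i => f i ^ I i).prod = (List.ofFn fun i => f i ^ I i).prod * y -
      I l • (c * (List.ofFn fun i => f i ^ Function.update I l (I l - 1) i).prod) := by
  have hy_rest : Commute y (List.ofFn fun i => f i ^ Function.update I l 0 i).prod := by
    refine Commute.list_prod_right _ _ fun z hz => ?_
    obtain ⟨i, rfl⟩ := List.mem_ofFn.1 hz
    rcases eq_or_ne i l with rfl | hi
    · simp
    · exact (hy i hi).pow_right _
  rw [prod_ofFn_pow_eq_pow_mul hf (Function.update I l (I l - 1)) l,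
    prod_ofFn_pow_eq_pow_mul hf I l, ← mul_assoc, mul_pow_eq_pow_mul_sub_nsmul hc hyl, sub_mul,
    mul_assoc, hy_rest.eq, Function.update_self, Function.update_idem, smul_mul_assoc, mul_assoc,
    mul_assoc]

theorem brk_apply {k H : Type*} [Field k] [Ring H] [Algebra k H] (f g : H →ₗ[k] H) (a : H) :
    brk f g a = f (g a) - g (f a) :=
  rfl

theorem brk_self {k H : Type*} [Field k] [Ring H] [Algebra k H] (f : H →ₗ[k] H) : brk f f = 0 :=
  sub_self _

namespace HeisenbergPBW

variable {k : Type*} [Field k] {n : ℕ} {H : Type*} [Ring H] [Algebra k H]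
  (B : HeisenbergPBW k n H)

theorem y_mul_x_self (l : Fin n) : B.y l * B.x l = B.x l * B.y l - B.h := by
  have hxy := B.comm_xy l l
  rw [if_pos rfl] at hxy
  rw [← hxy, sub_sub_cancel]

theorem commute_y_x_of_ne {l i : Fin n} (hi : i ≠ l) : Commute (B.y l) (B.x i) :=
  (sub_eq_zero.mp ((B.comm_xy i l).trans (if_neg hi))).symm

theorem commute_h (a : H) : Commute B.h a :=
  B.h_central a

theorem h_mul_basis (m : ℕ) (I J : Fin n → ℕ) :
    B.h * B.basis (m, I, J) = B.basis (m + 1, I, J) := by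
  rw [B.basis_eq, B.basis_eq, ← mul_assoc, ← mul_assoc, ← pow_succ']

theorem x_mul_basis (l : Fin n) (m : ℕ) (I J : Fin n → ℕ) :
    B.x l * B.basis (m, I, J) = B.basis (m, Function.update I l (I l + 1), J) := by
  rw [B.basis_eq, B.basis_eq, ← mul_assoc, ← mul_assoc, ← ((B.commute_h _).pow_left m).eq,
    mul_assoc (B.h ^ m), List.mul_prod_ofFn_pow B.comm_xx]

theorem y_mul_basis (l : Fin n) (m : ℕ) (I J : Fin n → ℕ) :
    B.y l * B.basis (m, I, J) = B.basis (m, I, Function.update J l (J l + 1)) -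
      I l • B.basis (m + 1, Function.update I l (I l - 1), J) := by
  rw [B.basis_eq, B.basis_eq, B.basis_eq, ← mul_assoc, ← mul_assoc,
    ← ((B.commute_h _).pow_left m).eq, mul_assoc (B.h ^ m),
    List.mul_prod_ofFn_pow_of_mul_eq_sub B.comm_xx (B.commute_h _) (B.y_mul_x_self l)
      fun i hi => B.commute_y_x_of_ne hi,
    mul_sub, sub_mul]
  congr 1
  · rw [← mul_assoc (B.h ^ m), mul_assoc _ (B.y l), List.mul_prod_ofFn_pow B.comm_yy]
  · rw [mul_smul_comm, smul_mul_assoc, ← mul_assoc (B.h ^ m), ← pow_succ]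

theorem pdx_basis (l : Fin n) (m : ℕ) (I J : Fin n → ℕ) :
    B.pdx l (B.basis (m, I, J)) = I l • B.basis (m, Function.update I l (I l - 1), J) :=
  B.basis.constr_basis _ _ _

theorem pdy_basis (l : Fin n) (m : ℕ) (I J : Fin n → ℕ) :
    B.pdy l (B.basis (m, I, J)) = J l • B.basis (m, I, Function.update J l (J l - 1)) :=
  B.basis.constr_basis _ _ _

theorem pdh_basis (m : ℕ) (I J : Fin n → ℕ) :
    B.pdh (B.basis (m, I, J)) = m • B.basis (m - 1, I, J) :=
  B.basis.constr_basis _ _ _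

open Function

theorem brk_pdx_pdx (l l' : Fin n) : brk (B.pdx l) (B.pdx l') = 0 := by
  rcases eq_or_ne l l' with rfl | hne
  · exact brk_self _
  refine B.basis.ext fun ⟨m, I, J⟩ => ?_
  simp only [brk_apply, pdx_basis, map_nsmul, smul_smul, update_of_ne hne,
    update_of_ne hne.symm, update_comm hne, LinearMap.zero_apply]
  rw [Nat.mul_comm, sub_self]

theorem brk_pdy_pdy (l l' : Fin n) : brk (B.pdy l) (B.pdy l') = 0 := by
  rcases eq_or_ne l l' with rfl | hne
  · exact brk_self _
  refine B.basis.ext fun ⟨m, I, J⟩ => ?_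
  simp only [brk_apply, pdy_basis, map_nsmul, smul_smul, update_of_ne hne,
    update_of_ne hne.symm, update_comm hne, LinearMap.zero_apply]
  rw [Nat.mul_comm, sub_self]

theorem brk_pdx_pdy (l l' : Fin n) : brk (B.pdx l) (B.pdy l') = 0 :=
  B.basis.ext fun ⟨m, I, J⟩ => by
    simp only [brk_apply, pdx_basis, pdy_basis, map_nsmul, smul_smul, LinearMap.zero_apply]
    rw [Nat.mul_comm, sub_self]

theorem brk_pdx_pdh (l : Fin n) : brk (B.pdx l) B.pdh = 0 :=
  B.basis.ext fun ⟨m, I, J⟩ => by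
    simp only [brk_apply, pdx_basis, pdh_basis, map_nsmul, smul_smul, LinearMap.zero_apply]
    rw [Nat.mul_comm, sub_self]

theorem brk_pdy_pdh (l : Fin n) : brk (B.pdy l) B.pdh = 0 :=
  B.basis.ext fun ⟨m, I, J⟩ => by
    simp only [brk_apply, pdy_basis, pdh_basis, map_nsmul, smul_smul, LinearMap.zero_apply]
    rw [Nat.mul_comm, sub_self]

theorem brk_pdx_mulLeft_x_self (l : Fin n) :
    brk (B.pdx l) (LinearMap.mulLeft k (B.x l)) = LinearMap.id :=
  B.basis.ext fun ⟨m, I, J⟩ => by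
    simp only [brk_apply, LinearMap.mulLeft_apply, LinearMap.id_apply, pdx_basis, x_mul_basis,
      map_nsmul, update_self, update_idem, Nat.add_sub_cancel, update_eq_self]
    rcases eq_or_ne (I l) 0 with hI | hI
    · simp [hI]
    · rw [Nat.sub_one_add_one hI, update_eq_self, succ_nsmul, add_sub_cancel_left]

theorem brk_pdx_mulLeft_x_of_ne {l l' : Fin n} (hne : l ≠ l') :
    brk (B.pdx l) (LinearMap.mulLeft k (B.x l')) = 0 :=
  B.basis.ext fun ⟨m, I, J⟩ => by
    simp only [brk_apply, LinearMap.mulLeft_apply, pdx_basis, x_mul_basis, map_nsmul,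
      update_of_ne hne, update_of_ne hne.symm, update_comm hne, sub_self, LinearMap.zero_apply]

theorem brk_pdx_mulLeft_y (l l' : Fin n) : brk (B.pdx l) (LinearMap.mulLeft k (B.y l')) = 0 :=
  B.basis.ext fun ⟨m, I, J⟩ => by
    simp only [brk_apply, LinearMap.mulLeft_apply, pdx_basis, y_mul_basis, map_nsmul, map_sub,
      smul_sub, smul_smul, LinearMap.zero_apply]
    rcases eq_or_ne l l' with rfl | hne
    · simp only [update_self, update_idem]
      abel
    · rw [update_of_ne hne, update_of_ne hne.symm, update_comm hne, Nat.mul_comm]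
      abel

theorem brk_pdx_mulLeft_h (l : Fin n) : brk (B.pdx l) (LinearMap.mulLeft k B.h) = 0 :=
  B.basis.ext fun ⟨m, I, J⟩ => by
    simp only [brk_apply, LinearMap.mulLeft_apply, pdx_basis, h_mul_basis, map_nsmul, sub_self,
      LinearMap.zero_apply]

theorem brk_pdy_mulLeft_y_self (l : Fin n) :
    brk (B.pdy l) (LinearMap.mulLeft k (B.y l)) = LinearMap.id :=
  B.basis.ext fun ⟨m, I, J⟩ => by
    simp only [brk_apply, LinearMap.mulLeft_apply, LinearMap.id_apply, pdy_basis, y_mul_basis,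
      map_nsmul, map_sub, smul_sub, smul_smul, update_self, update_idem, Nat.add_sub_cancel,
      update_eq_self, Nat.mul_comm (I l) (J l), sub_sub_sub_cancel_right]
    rcases eq_or_ne (J l) 0 with hJ | hJ
    · simp [hJ]
    · rw [Nat.sub_one_add_one hJ, update_eq_self, succ_nsmul, add_sub_cancel_left]

theorem brk_pdy_mulLeft_y_of_ne {l l' : Fin n} (hne : l ≠ l') :
    brk (B.pdy l) (LinearMap.mulLeft k (B.y l')) = 0 :=
  B.basis.ext fun ⟨m, I, J⟩ => by
    simp only [brk_apply, LinearMap.mulLeft_apply, pdy_basis, y_mul_basis, map_nsmul, map_sub,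
      smul_sub, smul_smul, update_of_ne hne, update_of_ne hne.symm, update_comm hne,
      Nat.mul_comm (I l') (J l), sub_self, LinearMap.zero_apply]

theorem brk_pdy_mulLeft_x (l l' : Fin n) : brk (B.pdy l) (LinearMap.mulLeft k (B.x l')) = 0 :=
  B.basis.ext fun ⟨m, I, J⟩ => by
    simp only [brk_apply, LinearMap.mulLeft_apply, pdy_basis, x_mul_basis, map_nsmul, sub_self,
      LinearMap.zero_apply]

theorem brk_pdy_mulLeft_h (l : Fin n) : brk (B.pdy l) (LinearMap.mulLeft k B.h) = 0 :=
  B.basis.ext fun ⟨m, I, J⟩ => by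
    simp only [brk_apply, LinearMap.mulLeft_apply, pdy_basis, h_mul_basis, map_nsmul, sub_self,
      LinearMap.zero_apply]

theorem brk_pdh_mulLeft_h : brk B.pdh (LinearMap.mulLeft k B.h) = LinearMap.id :=
  B.basis.ext fun ⟨m, I, J⟩ => by
    simp only [brk_apply, LinearMap.mulLeft_apply, LinearMap.id_apply, pdh_basis, h_mul_basis,
      map_nsmul, Nat.add_sub_cancel]
    cases m with
    | zero => simp
    | succ m => rw [Nat.add_sub_cancel, succ_nsmul, add_sub_cancel_left]

theorem brk_pdh_mulLeft_y (l : Fin n) : brk B.pdh (LinearMap.mulLeft k (B.y l)) = -B.pdx l :=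
  B.basis.ext fun ⟨m, I, J⟩ => by
    simp only [brk_apply, LinearMap.mulLeft_apply, LinearMap.neg_apply, pdh_basis, pdx_basis,
      y_mul_basis, map_nsmul, map_sub, smul_sub, smul_smul, Nat.add_sub_cancel]
    cases m with
    | zero => simp
    | succ m =>
      rw [Nat.add_sub_cancel]
      module

theorem brk_pdh_mulLeft_x (l : Fin n) : brk B.pdh (LinearMap.mulLeft k (B.x l)) = 0 :=
  B.basis.ext fun ⟨m, I, J⟩ => by
    simp only [brk_apply, LinearMap.mulLeft_apply, pdh_basis, x_mul_basis, map_nsmul, sub_self,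
      LinearMap.zero_apply]

end HeisenbergPBW

theorem HeisenbergPBW.partials_commutation_relations_general {k : Type*} [Field k]
    {n : ℕ} {H : Type*} [Ring H] [Algebra k H] (B : HeisenbergPBW k n H) :
    (∀ l l', brk (B.pdx l) (B.pdx l') = 0 ∧ brk (B.pdy l) (B.pdy l') = 0 ∧
      brk (B.pdx l) (B.pdy l') = 0) ∧
    (∀ l, brk (B.pdx l) B.pdh = 0 ∧ brk (B.pdy l) B.pdh = 0) ∧
    (∀ l, brk (B.pdx l) (LinearMap.mulLeft k (B.x l)) = LinearMap.id) ∧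
    (∀ l l', l ≠ l' → brk (B.pdx l) (LinearMap.mulLeft k (B.x l')) = 0) ∧
    (∀ l l', brk (B.pdx l) (LinearMap.mulLeft k (B.y l')) = 0) ∧
    (∀ l, brk (B.pdx l) (LinearMap.mulLeft k B.h) = 0) ∧
    (∀ l, brk (B.pdy l) (LinearMap.mulLeft k (B.y l)) = LinearMap.id) ∧
    (∀ l l', l ≠ l' → brk (B.pdy l) (LinearMap.mulLeft k (B.y l')) = 0) ∧
    (∀ l l', brk (B.pdy l) (LinearMap.mulLeft k (B.x l')) = 0) ∧
    (∀ l, brk (B.pdy l) (LinearMap.mulLeft k B.h) = 0) ∧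
    (brk B.pdh (LinearMap.mulLeft k B.h) = LinearMap.id) ∧
    (∀ l, brk B.pdh (LinearMap.mulLeft k (B.y l)) = -(B.pdx l)) ∧
    (∀ l, brk B.pdh (LinearMap.mulLeft k (B.x l)) = 0) :=
  ⟨fun l l' => ⟨B.brk_pdx_pdx l l', B.brk_pdy_pdy l l', B.brk_pdx_pdy l l'⟩,
    fun l => ⟨B.brk_pdx_pdh l, B.brk_pdy_pdh l⟩, B.brk_pdx_mulLeft_x_self,
    fun _ _ => B.brk_pdx_mulLeft_x_of_ne, B.brk_pdx_mulLeft_y, B.brk_pdx_mulLeft_h,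
    B.brk_pdy_mulLeft_y_self, fun _ _ => B.brk_pdy_mulLeft_y_of_ne, B.brk_pdy_mulLeft_x,
    B.brk_pdy_mulLeft_h, B.brk_pdh_mulLeft_h, B.brk_pdh_mulLeft_y, B.brk_pdh_mulLeft_x⟩

/-- The commutation relations for the formal partial derivatives `∂_{x_l}, ∂_{y_l}, ∂_h`
on the Heisenberg algebra `H_n` (char 0): `[∂_r, ∂_s] = 0` for all `r, s`;
`[∂_{x_l}, λ_{x_l}] = id` and `[∂_{x_l}, λ_r] = 0` for generators `r ≠ x_l`;
`[∂_{y_l}, λ_{y_l}] = id` and `[∂_{y_l}, λ_r] = 0` for `r ≠ y_l`; `[∂_h, λ_h] = id`,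
`[∂_h, λ_{y_l}] = -∂_{x_l}`, `[∂_h, λ_{x_l}] = 0`. -/
theorem HeisenbergPBW.partials_commutation_relations {k : Type*} [Field k] [CharZero k]
    {n : ℕ} {H : Type*} [Ring H] [Algebra k H] (B : HeisenbergPBW k n H) :
    (∀ l l', brk (B.pdx l) (B.pdx l') = 0 ∧ brk (B.pdy l) (B.pdy l') = 0 ∧
      brk (B.pdx l) (B.pdy l') = 0) ∧
    (∀ l, brk (B.pdx l) B.pdh = 0 ∧ brk (B.pdy l) B.pdh = 0) ∧
    (∀ l, brk (B.pdx l) (LinearMap.mulLeft k (B.x l)) = LinearMap.id) ∧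
    (∀ l l', l ≠ l' → brk (B.pdx l) (LinearMap.mulLeft k (B.x l')) = 0) ∧
    (∀ l l', brk (B.pdx l) (LinearMap.mulLeft k (B.y l')) = 0) ∧
    (∀ l, brk (B.pdx l) (LinearMap.mulLeft k B.h) = 0) ∧
    (∀ l, brk (B.pdy l) (LinearMap.mulLeft k (B.y l)) = LinearMap.id) ∧
    (∀ l l', l ≠ l' → brk (B.pdy l) (LinearMap.mulLeft k (B.y l')) = 0) ∧
    (∀ l l', brk (B.pdy l) (LinearMap.mulLeft k (B.x l')) = 0) ∧
    (∀ l, brk (B.pdy l) (LinearMap.mulLeft k B.h) = 0) ∧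
    (brk B.pdh (LinearMap.mulLeft k B.h) = LinearMap.id) ∧
    (∀ l, brk B.pdh (LinearMap.mulLeft k (B.y l)) = -(B.pdx l)) ∧
    (∀ l, brk B.pdh (LinearMap.mulLeft k (B.x l)) = 0) :=
  HeisenbergPBW.partials_commutation_relations_general B
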